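/- arXiv:2410.12834 — 7 statements merged into one kernel-verified Lean document; each statement's English description precedes it below -/
import Mathlib

section
/- Let G be a finite simple graph that is bipartite (i.e., admits a proper 2-coloring of its vertices) and N-regular for some N ≥ 1. Then G admits a 1-factorization: there exist N spanning subgraphs M₁, …, M_N of G, each of which is a perfect matching, whose edge sets are pairwise disjoint and whose union is the edge set of G. -/
/-!
A regular bipartite graph of positive degree satisfies Hall's condition: double counting the
edges leaving a vertex set `s` shows that `s` has at least `|s|` neighbours. Hence it has a perfect
matching (König), and deleting that matching leaves a bipartite graph regular of degree one less,
so induction on the degree peels off the `N` matchings of a 1-factorization.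
-/

/-- A set `M` of edges of a simple graph `G` is a perfect matching if every
vertex is incident to exactly one edge of `M`. -/
def IsPerfectMatchingSet {V : Type*} (G : SimpleGraph V) (M : Set (Sym2 V)) : Prop :=
  M ⊆ G.edgeSet ∧ ∀ v : V, ∃! e, e ∈ M ∧ v ∈ e

open Finset

namespace SimpleGraph

variable {V : Type*} {G : SimpleGraph V} {N : ℕ}

theorem IsRegularOfDegree.ncard_le_ncard_iUnion_neighborSet [Fintype V] [DecidableRel G.Adj]
    (hG : G.IsRegularOfDegree N) (hN : N ≠ 0) (s : Set V) :
    s.ncard ≤ (⋃ x ∈ s, G.neighborSet x).ncard := by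
  classical
  set t := s.toFinset.biUnion fun x => G.neighborFinset x
  have ht : (⋃ x ∈ s, G.neighborSet x) = t := by ext; simp [t]
  have hmul : #s.toFinset * N ≤ #t * N := by
    refine card_mul_le_card_mul G.Adj (fun a ha => ?_) (fun b _ => ?_)
    · rw [← hG a]
      refine card_le_card fun w hw => ?_
      rw [mem_neighborFinset] at hw
      exact (mem_bipartiteAbove G.Adj).mpr
        ⟨mem_biUnion.mpr ⟨a, ha, (mem_neighborFinset ..).mpr hw⟩, hw⟩
    · rw [← hG b]
      refine card_le_card fun a ha => ?_
      exact (mem_neighborFinset ..).mpr ((mem_bipartiteBelow G.Adj).mp ha).2.symm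
  rw [ht, Set.ncard_coe_finset, Set.ncard_eq_toFinset_card']
  exact Nat.le_of_mul_le_mul_right hmul (Nat.pos_of_ne_zero hN)

theorem IsRegularOfDegree.exists_isPerfectMatching [Fintype V] [DecidableRel G.Adj]
    (hbip : G.IsBipartite) (hG : G.IsRegularOfDegree N) (hN : N ≠ 0) :
    ∃ M : G.Subgraph, M.IsPerfectMatching := by
  obtain ⟨s, t, hst⟩ := hbip.exists_isBipartiteWith
  exact exists_isPerfectMatching_of_forall_ncard_le hst (hG.ncard_le_ncard_iUnion_neighborSet hN)

theorem Subgraph.IsPerfectMatching.isPerfectMatchingSet {M : G.Subgraph}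
    (hM : M.IsPerfectMatching) : IsPerfectMatchingSet G M.edgeSet := by
  refine ⟨M.edgeSet_subset, fun v => ?_⟩
  obtain ⟨w, hvw, huniq⟩ := Subgraph.isPerfectMatching_iff.mp hM v
  refine ⟨s(v, w), ⟨hvw, Sym2.mem_mk_left v w⟩, ?_⟩
  rintro e ⟨he, hve⟩
  rw [← Sym2.other_spec hve] at he ⊢
  exact congrArg (s(v, ·)) (huniq _ he)

theorem IsRegularOfDegree.deleteEdges_of_isPerfectMatching [DecidableEq V] {M : G.Subgraph}
    [G.LocallyFinite] [(G.deleteEdges M.edgeSet).LocallyFinite]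
    (hG : G.IsRegularOfDegree (N + 1)) (hM : M.IsPerfectMatching) :
    (G.deleteEdges M.edgeSet).IsRegularOfDegree N := by
  intro v
  obtain ⟨w, hvw, huniq⟩ := Subgraph.isPerfectMatching_iff.mp hM v
  have hnbr : (G.deleteEdges M.edgeSet).neighborFinset v = (G.neighborFinset v).erase w := by
    ext u
    simp only [mem_neighborFinset, deleteEdges_adj, Subgraph.mem_edgeSet, mem_erase]
    exact ⟨fun h => ⟨fun huw => h.2 (huw ▸ hvw), h.1⟩,
      fun h => ⟨h.2, fun hvu => h.1 (huniq u hvu)⟩⟩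
  rw [← card_neighborFinset_eq_degree, hnbr, card_erase_of_mem, card_neighborFinset_eq_degree,
    hG v, Nat.add_sub_cancel]
  exact (mem_neighborFinset ..).mpr (M.adj_sub hvw)

def IsOneFactorization {ι : Type*} (G : SimpleGraph V) (M : ι → Set (Sym2 V)) : Prop :=
  (∀ i, IsPerfectMatchingSet G (M i)) ∧ (Pairwise fun i j => Disjoint (M i) (M j)) ∧
    (⋃ i, M i) = G.edgeSet

theorem IsOneFactorization.cons {n : ℕ} {M₀ : Set (Sym2 V)} {M : Fin n → Set (Sym2 V)}
    (h₀ : IsPerfectMatchingSet G M₀) (h : (G.deleteEdges M₀).IsOneFactorization M) :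
    G.IsOneFactorization (Fin.cons M₀ M : Fin (n + 1) → Set (Sym2 V)) := by
  obtain ⟨hpm, hdisj, hunion⟩ := h
  rw [edgeSet_deleteEdges] at hunion
  have hsub (i : Fin n) : M i ⊆ G.edgeSet \ M₀ := hunion ▸ Set.subset_iUnion M i
  have hdisj₀ (i : Fin n) : Disjoint M₀ (M i) := Set.disjoint_sdiff_right.mono_right (hsub i)
  refine ⟨Fin.cases h₀ fun i => ⟨(hsub i).trans Set.sdiff_subset, (hpm i).2⟩, ?_, ?_⟩
  · intro i j hij
    cases i using Fin.cases <;> cases j using Fin.cases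
    · exact absurd rfl hij
    · exact hdisj₀ _
    · exact (hdisj₀ _).symm
    · exact hdisj (Fin.succ_injective _ |>.ne_iff.mp hij)
  · rw [Set.iUnion_cons, hunion, Set.union_sdiff_cancel h₀.1]

theorem IsRegularOfDegree.exists_isOneFactorization [Fintype V] [DecidableRel G.Adj]
    (hbip : G.IsBipartite) (hG : G.IsRegularOfDegree N) :
    ∃ M : Fin N → Set (Sym2 V), G.IsOneFactorization M := by
  induction N generalizing G with
  | zero =>
    refine ⟨Fin.elim0, fun i => i.elim0, fun i => i.elim0, ?_⟩
    rw [Set.iUnion_of_empty, eq_comm, edgeSet_eq_empty]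
    ext u w
    exact iff_of_false ((G.degree_eq_zero u).mp (hG u) w) id
  | succ N ih =>
    classical
    obtain ⟨M, hM⟩ := hG.exists_isPerfectMatching hbip N.succ_ne_zero
    obtain ⟨M', hM'⟩ := ih (hbip.mono_left (deleteEdges_le _))
      (hG.deleteEdges_of_isPerfectMatching hM)
    exact ⟨_, .cons hM.isPerfectMatchingSet hM'⟩

end SimpleGraph

theorem bipartite_regular_one_factorization_general {V : Type*} [Fintype V]
    (G : SimpleGraph V) [DecidableRel G.Adj] (N : ℕ)
    (hbip : G.Colorable 2) (hreg : G.IsRegularOfDegree N) :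
    ∃ M : Fin N → Set (Sym2 V),
      (∀ i, IsPerfectMatchingSet G (M i)) ∧
      (Pairwise fun i j => Disjoint (M i) (M j)) ∧
      (⋃ i, M i) = G.edgeSet :=
  hreg.exists_isOneFactorization hbip

theorem bipartite_regular_one_factorization {V : Type*} [Fintype V]
    (G : SimpleGraph V) [DecidableRel G.Adj] (N : ℕ) (hN : 1 ≤ N)
    (hbip : G.Colorable 2) (hreg : G.IsRegularOfDegree N) :
    ∃ M : Fin N → Set (Sym2 V),
      (∀ i, IsPerfectMatchingSet G (M i)) ∧
      (Pairwise fun i j => Disjoint (M i) (M j)) ∧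
      (⋃ i, M i) = G.edgeSet :=
  bipartite_regular_one_factorization_general G N hbip hreg
end

section
/- For every n ≥ 1, the complete graph K_{2n} on 2n vertices admits a 1-factorization: its edge set can be partitioned into 2n − 1 pairwise disjoint perfect matchings. -/
set_option linter.unusedSectionVars false

namespace OneFactorAux

variable {m : ℕ} [NeZero m]

/-- partner function for round `i` -/
def pptr (i : ZMod m) : Option (ZMod m) → Option (ZMod m)
  | none => some i
  | some v => if v = i then none else some (2 * i - v)

lemma two_cancel (hm : Odd m) {a b : ZMod m} (h : 2 * a = 2 * b) : a = b := by
  have hu : IsUnit (2 : ZMod m) := by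
    have : IsUnit ((2 : ℕ) : ZMod m) := by
      rw [ZMod.isUnit_iff_coprime]
      exact (Nat.coprime_two_left).mpr hm
    simpa using this
  exact hu.mul_left_cancel h

lemma pptr_ne (hm : Odd m) (i : ZMod m) (x : Option (ZMod m)) : pptr i x ≠ x := by
  cases x with
  | none => simp [pptr]
  | some v =>
    by_cases h : v = i
    · simp [pptr, h]
    · simp only [pptr, if_neg h, ne_eq, Option.some.injEq]
      intro hvv
      apply h
      apply two_cancel hm
      linear_combination -hvv

lemma pptr_invol (i : ZMod m) (x : Option (ZMod m)) : pptr i (pptr i x) = x := by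
  cases x with
  | none => simp [pptr]
  | some v =>
    by_cases h : v = i
    · simp [pptr, h]
    · have hne : 2 * i - v ≠ i := by
        intro hh
        apply h
        linear_combination -hh
      simp only [pptr, if_neg h, if_neg hne]
      congr 1
      ring

lemma pptr_inj (hm : Odd m) {i j : ZMod m} {x : Option (ZMod m)}
    (h : pptr i x = pptr j x) : i = j := by
  cases x with
  | none => simpa [pptr] using h
  | some v =>
    have hpi : ∀ k : ZMod m, pptr k (some v) = if v = k then none else some (2 * k - v) :=
      fun k => rfl
    rw [hpi i, hpi j] at h
    by_cases hi : v = i <;> by_cases hj : v = j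
    · rw [← hi, ← hj]
    · rw [if_pos hi, if_neg hj] at h; cases h
    · rw [if_neg hi, if_pos hj] at h; cases h
    · rw [if_neg hi, if_neg hj] at h
      have h' := Option.some.inj h
      apply two_cancel hm
      linear_combination h' 

lemma pptr_cover (hm : Odd m) {a b : Option (ZMod m)} (hab : a ≠ b) :
    ∃ i, pptr i a = b := by
  have hu : ∃ t : ZMod m, 2 * t = 1 := by
    have h2 : IsUnit (2 : ZMod m) := by
      have : IsUnit ((2 : ℕ) : ZMod m) := by
        rw [ZMod.isUnit_iff_coprime]
        exact (Nat.coprime_two_left).mpr hm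
      simpa using this
    obtain ⟨u, hu⟩ := h2
    exact ⟨↑u⁻¹, by rw [← hu]; exact u.mul_inv⟩
  obtain ⟨t, ht⟩ := hu
  cases a with
  | none =>
    cases b with
    | none => exact absurd rfl hab
    | some w => exact ⟨w, rfl⟩
  | some v =>
    cases b with
    | none => exact ⟨v, by simp [pptr]⟩
    | some w =>
      have hvw : v ≠ w := fun h => hab (by rw [h])
      refine ⟨t * (v + w), ?_⟩
      have hvi : v ≠ t * (v + w) := by
        intro h
        apply hvw
        linear_combination 2 * h + (v + w) * ht
      simp only [pptr, if_neg hvi, Option.some.injEq]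
      linear_combination (v + w) * ht

variable {W : Type*}

/-- the `i`-th matching, transported to `W` -/
def MM (e : Option (ZMod m) ≃ W) (i : ZMod m) : Set (Sym2 W) :=
  {s | ∃ x, s = s(e x, e (pptr i x))}

lemma MM_perfect (hm : Odd m) (e : Option (ZMod m) ≃ W) (i : ZMod m) :
    IsPerfectMatchingSet (⊤ : SimpleGraph W) (MM e i) := by
  constructor
  · rintro s ⟨x, rfl⟩
    rw [SimpleGraph.edgeSet_top]
    exact fun h => pptr_ne hm i x (e.injective h.symm)
  · intro v
    refine ⟨s(e (e.symm v), e (pptr i (e.symm v))), ⟨⟨e.symm v, rfl⟩, by simp⟩, ?_⟩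
    rintro s ⟨⟨x, rfl⟩, hv⟩
    rw [Sym2.mem_iff] at hv
    rcases hv with hv | hv
    · have hx : x = e.symm v := by rw [hv]; simp
      rw [hx]
    · have hpx : pptr i x = e.symm v := by rw [hv]; simp
      have hx : x = pptr i (e.symm v) := by rw [← hpx, pptr_invol]
      rw [hx, pptr_invol]
      exact Sym2.eq_swap

lemma MM_inj (hm : Odd m) (e : Option (ZMod m) ≃ W) {i j : ZMod m}
    {s : Sym2 W} (hi : s ∈ MM e i) (hj : s ∈ MM e j) : i = j := by
  obtain ⟨x, rfl⟩ := hi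
  obtain ⟨y, hy⟩ := hj
  rw [Sym2.eq_iff] at hy
  rcases hy with ⟨h1, h2⟩ | ⟨h1, h2⟩
  · cases e.injective h1
    exact pptr_inj hm (e.injective h2)
  · have hx : x = pptr j y := e.injective h1
    have h3 : pptr i x = y := e.injective h2
    have : pptr j y = pptr i y := by
      rw [← hx, ← h3, pptr_invol]
    exact (pptr_inj hm this).symm

lemma MM_union (hm : Odd m) (e : Option (ZMod m) ≃ W) :
    (⋃ i, MM e i) = (⊤ : SimpleGraph W).edgeSet := by
  apply Set.Subset.antisymm
  · rintro s hs
    simp only [Set.mem_iUnion] at hs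
    obtain ⟨i, hi⟩ := hs
    exact (MM_perfect hm e i).1 hi
  · intro s hs
    rw [SimpleGraph.edgeSet_top] at hs
    induction s with
    | _ a b =>
      have hab : e.symm a ≠ e.symm b := fun h => hs (by simpa using congrArg e h)
      obtain ⟨i, hi⟩ := pptr_cover hm hab
      simp only [Set.mem_iUnion]
      exact ⟨i, e.symm a, by rw [hi]; simp⟩

end OneFactorAux

open OneFactorAux in
theorem completeGraph_one_factorization (n : ℕ) (hn : 1 ≤ n) :
    ∃ M : Fin (2 * n - 1) → Set (Sym2 (Fin (2 * n))),
      (∀ i, IsPerfectMatchingSet (⊤ : SimpleGraph (Fin (2 * n))) (M i)) ∧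
      (Pairwise fun i j => Disjoint (M i) (M j)) ∧
      (⋃ i, M i) = (⊤ : SimpleGraph (Fin (2 * n))).edgeSet := by
  set m := 2 * n - 1 with hmdef
  have hm0 : 0 < m := by omega
  have : NeZero m := ⟨hm0.ne'⟩
  have hmodd : Odd m := ⟨n - 1, by omega⟩
  have hcard : m + 1 = 2 * n := by omega
  -- equivalence Option (ZMod m) ≃ Fin (2*n)
  let z : ZMod m ≃ Fin m :=
    { toFun := fun x => ⟨x.val, ZMod.val_lt x⟩
      invFun := fun k => ((k : ℕ) : ZMod m)
      left_inv := fun x => ZMod.natCast_rightInverse x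
      right_inv := fun k => Fin.ext (by simp [ZMod.val_cast_of_lt k.isLt]) }
  let e : Option (ZMod m) ≃ Fin (2 * n) :=
    ((Equiv.optionCongr z).trans finSuccEquivLast.symm).trans (finCongr hcard)
  refine ⟨fun k => MM e ((k : ℕ) : ZMod m), fun k => MM_perfect hmodd e _, ?_, ?_⟩
  · intro i j hij
    rw [Set.disjoint_left]
    intro s hi hj
    apply hij
    have := MM_inj hmodd e hi hj
    have hv := congrArg ZMod.val this
    rw [ZMod.val_cast_of_lt i.isLt, ZMod.val_cast_of_lt j.isLt] at hv
    exact Fin.ext hv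
  · rw [← MM_union hmodd e]
    apply Set.Subset.antisymm
    · exact Set.iUnion_subset fun k => Set.subset_iUnion (MM e) _
    · apply Set.iUnion_subset
      intro x
      have : ((((⟨x.val, ZMod.val_lt x⟩ : Fin m) : ℕ)) : ZMod m) = x :=
        ZMod.natCast_rightInverse x
      rw [← this]
      exact Set.subset_iUnion (fun k : Fin m => MM e ((k : ℕ) : ZMod m)) _
end

section
/- Let C be a ℤ/2-linear subspace of (ℤ/2)^N, and define the quotient graph Q_C on the quotient group (ℤ/2)^N / C by declaring two cosets a and b adjacent exactly when a ≠ b and b = a + ē_i for some i, where ē_i denotes the coset of the i-th standard basis vector e_i. Then Q_C is N-regular if and only if every nonzero element of C has Hamming weight at least 3 (equivalently, C has no codewords of weight 1 or 2). -/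
/-- The quotient graph `Q_C` of the hypercube `Q_N` by a linear binary code `C`:
vertices are cosets in `(ℤ/2)^N / C`, and cosets `a ≠ b` are adjacent exactly
when `b = a + ē_i` for some `i`, where `ē_i` is the coset of the `i`-th standard
basis vector. -/
def codeQuotientGraph {N : ℕ} (C : Submodule (ZMod 2) (Fin N → ZMod 2)) :
    SimpleGraph ((Fin N → ZMod 2) ⧸ C) :=
  SimpleGraph.fromRel
    (fun a b => ∃ i : Fin N, b = a + Submodule.Quotient.mk (Pi.single i 1))

/-!
The neighbours of a coset `v` are the cosets `v + ē_i` other than `v` itself, so `v` has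
degree `N` exactly when the `ē_i` are pairwise distinct and nonzero, independently of `v`.
Now `ē_i = 0` means `e_i ∈ C`, and `ē_i = ē_j` means `e_i + e_j ∈ C`; as every binary vector of
weight `1` or `2` has one of these two shapes, this says that `C` has no codewords of weight
`1` or `2`.
-/

open Function Set

theorem card_range_diff_singleton_eq_card_iff {ι α : Type*} [Fintype ι] (f : ι → α) (a : α) :
    Nat.card ↥(range f \ {a}) = Fintype.card ι ↔ Injective f ∧ a ∉ range f := by
  classical
  have hrange : range f = ↑(Finset.univ.image f) := by simp
  rw [hrange, ← Finset.coe_singleton, ← Finset.coe_sdiff, Nat.card_coe_set_eq,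
    Set.ncard_coe_finset, ← Finset.erase_eq, ← Finset.card_univ, Finset.mem_coe]
  have himage : (Finset.univ.image f).card ≤ (Finset.univ : Finset ι).card := Finset.card_image_le
  constructor
  · intro h
    have ha : a ∉ Finset.univ.image f := fun ha =>
      (Finset.card_erase_lt_of_mem ha).not_ge (h ▸ himage)
    rw [Finset.erase_eq_of_notMem ha, Finset.card_image_iff, Finset.coe_univ,
      Set.injOn_univ] at h
    exact ⟨h, ha⟩
  · rintro ⟨hf, ha⟩
    rw [Finset.erase_eq_of_notMem ha, Finset.card_image_of_injective _ hf]

theorem SimpleGraph.neighborSet_fromRel_add {G ι : Type*} [AddGroup G] (g : ι → G)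
    (hg : ∀ i, g i + g i = 0) (v : G) :
    (fromRel fun a b => ∃ i, b = a + g i).neighborSet v = range (v + g ·) \ {v} := by
  have hsymm : ∀ a b i, a = b + g i → b = a + g i := by
    rintro a b i rfl
    rw [add_assoc, hg, add_zero]
  ext w
  simp only [mem_neighborSet, fromRel_adj, mem_sdiff, mem_range, mem_singleton_iff]
  constructor
  · rintro ⟨hvw, ⟨i, rfl⟩ | ⟨i, h⟩⟩
    · exact ⟨⟨i, rfl⟩, hvw.symm⟩
    · exact ⟨⟨i, (hsymm _ _ _ h).symm⟩, hvw.symm⟩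
  · rintro ⟨⟨i, rfl⟩, hvw⟩
    exact ⟨Ne.symm hvw, Or.inl ⟨i, rfl⟩⟩

section Code

variable {N : ℕ} (C : Submodule (ZMod 2) (Fin N → ZMod 2))

theorem codeQuotientGraph_neighborSet (v : (Fin N → ZMod 2) ⧸ C) :
    (codeQuotientGraph C).neighborSet v =
      range (fun i => v + C.mkQ (Pi.single i 1)) \ {v} :=
  SimpleGraph.neighborSet_fromRel_add _ (fun _ => ZModModule.add_self _) v

theorem card_neighborSet_codeQuotientGraph_eq_iff (v : (Fin N → ZMod 2) ⧸ C) :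
    Nat.card ((codeQuotientGraph C).neighborSet v) = N ↔
      (∀ i, Pi.single i 1 ∉ C) ∧ ∀ i j, i ≠ j → Pi.single i 1 + Pi.single j 1 ∉ C := by
  have hcard := card_range_diff_singleton_eq_card_iff (fun i => v + C.mkQ (Pi.single i 1)) v
  rw [Fintype.card_fin] at hcard
  have hinj : Injective (fun i => v + C.mkQ (Pi.single i 1)) ↔
      Injective (fun i => C.mkQ (Pi.single i 1)) :=
    (add_right_injective v).of_comp_iff _
  rw [codeQuotientGraph_neighborSet, hcard, and_comm, hinj]
  simp only [Injective, mem_range, add_eq_left, Submodule.mkQ_apply,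
    Submodule.Quotient.mk_eq_zero, Submodule.Quotient.eq, ZModModule.sub_eq_add, not_exists,
    ne_eq, not_imp_not]

end Code

section Binary

variable {ι : Type*} [Fintype ι] [DecidableEq ι]

theorem hammingNorm_sum_pi_single_one {R : Type*} [AddCommMonoidWithOne R] [NeZero (1 : R)]
    [DecidableEq R] (s : Finset ι) :
    hammingNorm (∑ i ∈ s, Pi.single i (1 : R)) = s.card := by
  simp only [hammingNorm, Finset.sum_apply, Finset.sum_pi_single, ne_eq, ite_eq_right_iff,
    one_ne_zero, imp_false, not_not, Finset.filter_mem_eq_inter, Finset.univ_inter]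

theorem ZMod.exists_sum_pi_single_one_eq (c : ι → ZMod 2) :
    ∃ s : Finset ι, ∑ i ∈ s, Pi.single i 1 = c := by
  refine ⟨Finset.univ.filter (c · ≠ 0), funext fun k => ?_⟩
  simp only [Finset.sum_apply, Finset.sum_pi_single, Finset.mem_filter, Finset.mem_univ,
    true_and]
  generalize c k = x
  fin_cases x <;> rfl

theorem ZMod.three_le_hammingNorm_iff (S : Set (ι → ZMod 2)) :
    (∀ c ∈ S, c ≠ 0 → 3 ≤ hammingNorm c) ↔
      (∀ i, Pi.single i 1 ∉ S) ∧ ∀ i j, i ≠ j → Pi.single i 1 + Pi.single j 1 ∉ S := by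
  have hne_zero (s : Finset ι) : ∑ i ∈ s, Pi.single i (1 : ZMod 2) ≠ 0 ↔ s.Nonempty := by
    rw [← hammingNorm_ne_zero_iff, hammingNorm_sum_pi_single_one, Finset.card_ne_zero]
  constructor
  · intro h
    have three_le (s : Finset ι) (hs : s.Nonempty) (hmem : ∑ i ∈ s, Pi.single i 1 ∈ S) :
        3 ≤ s.card := by
      simpa only [hammingNorm_sum_pi_single_one] using h _ hmem ((hne_zero s).mpr hs)
    refine ⟨fun i hi => ?_, fun i j hij hmem => ?_⟩
    · simpa using three_le {i} (by simp) (by simpa using hi)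
    · have := three_le {i, j} (by simp) (by rwa [Finset.sum_pair hij])
      rw [Finset.card_pair hij] at this
      omega
  · rintro ⟨h1, h2⟩ c hc hc0
    obtain ⟨s, rfl⟩ := ZMod.exists_sum_pi_single_one_eq c
    rw [hammingNorm_sum_pi_single_one]
    have hpos := ((hne_zero s).mp hc0).card_pos
    by_contra! hlt
    interval_cases hcard : s.card
    · obtain ⟨i, rfl⟩ := Finset.card_eq_one.mp hcard
      exact h1 i (by simpa using hc)
    · obtain ⟨i, j, hij, rfl⟩ := Finset.card_eq_two.mp hcard
      exact h2 i j hij (by rwa [Finset.sum_pair hij] at hc)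

end Binary

/-- `Q_C` is `N`-regular if and only if every nonzero codeword of `C` has
Hamming weight at least `3`. -/
theorem codeQuotientGraph_regular_iff {N : ℕ}
    (C : Submodule (ZMod 2) (Fin N → ZMod 2)) :
    (∀ v : (Fin N → ZMod 2) ⧸ C,
        Nat.card ((codeQuotientGraph C).neighborSet v) = N) ↔
      (∀ c ∈ C, c ≠ 0 → 3 ≤ hammingNorm c) := by
  simp only [card_neighborSet_codeQuotientGraph_eq_iff, forall_const]
  exact (ZMod.three_le_hammingNorm_iff (C : Set (Fin N → ZMod 2))).symm
end

section
/- Let C be a ℤ/2-linear subspace of (ℤ/2)^N in which every nonzero element has Hamming weight at least 3, and let Q_C be the simple graph on the quotient group (ℤ/2)^N / C in which cosets a and b are adjacent exactly when a ≠ b and b = a + ē_i for some i, where ē_i is the coset of the i-th standard basis vector. Then Q_C is bipartite (admits a proper 2-coloring of its vertices) if and only if every element of C has even Hamming weight. -/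
theorem ZMod.eq_add_one_of_ne {u v : ZMod 2} (h : u ≠ v) : v = u + 1 := by
  revert u v; decide

theorem hammingNorm_single {ι : Type*} [Fintype ι] [DecidableEq ι] {β : ι → Type*}
    [∀ i, Zero (β i)] [∀ i, DecidableEq (β i)] (i : ι) {b : β i} (hb : b ≠ 0) :
    hammingNorm (Pi.single i b) = 1 := by
  rw [hammingNorm, Finset.card_eq_one]
  refine ⟨i, Finset.ext fun j => ?_⟩
  rcases eq_or_ne j i with rfl | hj <;> simp [*]

theorem natCast_hammingNorm_zmod_two {ι : Type*} [Fintype ι] (x : ι → ZMod 2) :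
    (hammingNorm x : ZMod 2) = ∑ i, x i := by
  rw [hammingNorm, Finset.natCast_card_filter]
  refine Finset.sum_congr rfl fun i _ => ?_
  generalize x i = a
  revert a; decide

theorem apply_add_eq_of_forall_add_single {ι α : Type*} [Finite ι] [DecidableEq ι]
    {f : (ι → ZMod 2) → α} (hf : ∀ x i, f (x + Pi.single i 1) = f x) (x y : ι → ZMod 2) :
    f (x + y) = f x := by
  induction y using Pi.single_induction generalizing x with
  | zero => rw [add_zero]
  | add y z hy hz => rw [← add_assoc, hz, hy]
  | single i m =>
    obtain rfl | rfl : m = 0 ∨ m = 1 := by revert m; decide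
    · rw [Pi.single_zero, add_zero]
    · exact hf x i

namespace codeQuotientGraph

variable {N : ℕ} {C : Submodule (ZMod 2) (Fin N → ZMod 2)}

theorem adj_iff {a b : (Fin N → ZMod 2) ⧸ C} :
    (codeQuotientGraph C).Adj a b ↔
      a ≠ b ∧ ∃ i, b = a + Submodule.Quotient.mk (Pi.single i 1) := by
  rw [codeQuotientGraph, SimpleGraph.fromRel_adj]
  refine and_congr_right fun _ => or_iff_left_of_imp ?_
  rintro ⟨i, rfl⟩
  exact ⟨i, by rw [add_assoc, ZModModule.add_self, add_zero]⟩

theorem adj_add_single (a : (Fin N → ZMod 2) ⧸ C) {i : Fin N} (hi : Pi.single i 1 ∉ C) :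
    (codeQuotientGraph C).Adj a (a + Submodule.Quotient.mk (Pi.single i 1)) :=
  adj_iff.2 ⟨by simpa [Submodule.Quotient.mk_eq_zero] using hi, i, rfl⟩

theorem coloring_mk (col : (codeQuotientGraph C).Coloring (ZMod 2))
    (hC : ∀ i, Pi.single i 1 ∉ C) (x : Fin N → ZMod 2) :
    col (Submodule.Quotient.mk x) = col 0 + ∑ i, x i := by
  have hflip : ∀ x i, col (Submodule.Quotient.mk (x + Pi.single i 1)) =
      col (Submodule.Quotient.mk x) + 1 := fun x i =>
    ZMod.eq_add_one_of_ne (col.valid (adj_add_single (Submodule.Quotient.mk x) (hC i)))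
  have hconst := apply_add_eq_of_forall_add_single
    (f := fun x => col (Submodule.Quotient.mk x) - ∑ i, x i) (fun x i => by
      simp only [hflip, Pi.add_apply, Finset.sum_add_distrib, Fintype.sum_pi_single']
      ring) 0 x
  simp only [zero_add, Submodule.Quotient.mk_zero, Pi.zero_apply, Finset.sum_const_zero,
    sub_zero] at hconst
  linear_combination hconst

theorem colorable_two_of_even (hC : ∀ c ∈ C, Even (hammingNorm c)) :
    (codeQuotientGraph C).Colorable 2 := by
  have hker : C ≤ LinearMap.ker (∑ i, LinearMap.proj i) := fun c hc => by
    simpa [← natCast_hammingNorm_zmod_two, ZMod.natCast_eq_zero_iff_even] using hC c hc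
  let parity := C.liftQ _ hker
  have hparity : ∀ i, parity (Submodule.Quotient.mk (Pi.single i 1)) = 1 := fun i => by
    simp [parity]
  simpa using (SimpleGraph.Coloring.mk parity fun {a b} hab => by
    obtain ⟨-, i, rfl⟩ := adj_iff.1 hab
    rw [map_add, hparity]
    exact left_ne_add.2 one_ne_zero).colorable

end codeQuotientGraph

/-- If every nonzero codeword of `C` has Hamming weight at least `3`, then `Q_C`
is bipartite if and only if `C` is an even code. -/
theorem codeQuotientGraph_bipartite_iff_even {N : ℕ}
    (C : Submodule (ZMod 2) (Fin N → ZMod 2))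
    (hC : ∀ c ∈ C, c ≠ 0 → 3 ≤ hammingNorm c) :
    (codeQuotientGraph C).Colorable 2 ↔ (∀ c ∈ C, Even (hammingNorm c)) := by
  refine ⟨fun hcol c hc => ?_, codeQuotientGraph.colorable_two_of_even⟩
  have hsingle : ∀ i : Fin N, Pi.single i 1 ∉ C := fun i hi => by
    have := hC _ hi (Pi.single_ne_zero_iff.2 one_ne_zero)
    rw [hammingNorm_single i one_ne_zero] at this
    omega
  have hcolor := codeQuotientGraph.coloring_mk (hcol.toColoring (by simp)) hsingle c
  rw [(Submodule.Quotient.mk_eq_zero C).2 hc, left_eq_add] at hcolor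
  rwa [← ZMod.natCast_eq_zero_iff_even, natCast_hammingNorm_zmod_two]
end

section
/- Let G be a connected finite simple graph on a vertex set V equipped with a regular edge coloring with N colors, given by permutations s₁, …, s_N of V such that: each sᵢ is an involution without fixed points, v and sᵢ(v) are adjacent for every vertex v and every i, sᵢ(v) ≠ s_j(v) whenever i ≠ j, and every edge of G is of the form {v, sᵢ(v)} for some i. Suppose the coloring satisfies the quadrilateral property, i.e., sᵢ ∘ s_j = s_j ∘ sᵢ for all i, j. Then there exist a ℤ/2-linear subspace C of (ℤ/2)^N in which every nonzero element has Hamming weight at least 3, and a bijection φ from the quotient group (ℤ/2)^N / C onto V such that φ(x + ē_i) = sᵢ(φ(x)) for every coset x and every i, where ē_i is the coset of the i-th standard basis vector. In particular, G with its coloring is isomorphic to the quotient Q_C of the hypercube graph Q_N with its parallel edge coloring. -/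
section Aux

variable {V : Type*} {N : ℕ} (s : Fin N → Equiv.Perm V)

private lemma zmod2_cases : ∀ a : ZMod 2, a = 0 ∨ a = 1 := by decide

variable (hinv : ∀ i, ∀ v, s i (s i v) = v)
variable (hcomm : ∀ i j v, s i (s j v) = s j (s i v))

/-- The factor homomorphism for a single color. -/
private def colorFactor (i : Fin N) : Multiplicative (ZMod 2) →* Equiv.Perm V where
  toFun a := s i ^ (Multiplicative.toAdd a).val
  map_one' := by
    show s i ^ (0 : ZMod 2).val = 1
    simp
  map_mul' a b := by
    have hsq : s i * s i = 1 := Equiv.ext fun v => hinv i v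
    have key : ∀ x y : ZMod 2, s i ^ (x + y).val = s i ^ x.val * s i ^ y.val := by
      have e00 : ((0 : ZMod 2) + 0).val = 0 := rfl
      have e01 : ((0 : ZMod 2) + 1).val = 1 := rfl
      have e10 : ((1 : ZMod 2) + 0).val = 1 := rfl
      have e11 : ((1 : ZMod 2) + 1).val = 0 := rfl
      have v0 : (0 : ZMod 2).val = 0 := rfl
      have v1 : (1 : ZMod 2).val = 1 := rfl
      intro x y
      rcases zmod2_cases x with hx | hx <;> rcases zmod2_cases y with hy | hy <;>
        subst hx <;> subst hy <;>
        simp [e00, e01, e10, e11, v0, v1, pow_succ, hsq]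
    exact key (Multiplicative.toAdd a) (Multiplicative.toAdd b)

include hcomm in
private lemma colorFactor_pairwise :
    Pairwise fun i j => ∀ x y, Commute (colorFactor s hinv i x) (colorFactor s hinv j y) := by
  intro i j _ x y
  have h : Commute (s i) (s j) := Equiv.ext fun v => hcomm i j v
  exact h.pow_pow _ _

/-- The action of `(ℤ/2)^N` on `V` by products of the involutions. -/
private def colorAct : (Fin N → ZMod 2) → Equiv.Perm V := fun x =>
  MonoidHom.noncommPiCoprod (colorFactor s hinv) (colorFactor_pairwise s hinv hcomm)
    (fun i => Multiplicative.ofAdd (x i))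

private lemma colorAct_add (x y : Fin N → ZMod 2) :
    colorAct s hinv hcomm (x + y) = colorAct s hinv hcomm x * colorAct s hinv hcomm y := by
  have h : (fun i => Multiplicative.ofAdd ((x + y) i)) =
      (fun i => Multiplicative.ofAdd (x i)) * (fun i => Multiplicative.ofAdd (y i)) := rfl
  unfold colorAct
  rw [h, map_mul]

private lemma colorAct_zero : colorAct s hinv hcomm 0 = 1 := by
  unfold colorAct
  exact (MonoidHom.noncommPiCoprod (colorFactor s hinv)
    (colorFactor_pairwise s hinv hcomm)).map_one

private lemma colorAct_single (i : Fin N) :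
    colorAct s hinv hcomm (Pi.single i 1) = s i := by
  have harg : (fun j => Multiplicative.ofAdd ((Pi.single i 1 : Fin N → ZMod 2) j)) =
      @Pi.mulSingle (Fin N) (fun _ => Multiplicative (ZMod 2)) _ _ i
        (Multiplicative.ofAdd (1 : ZMod 2)) := by
    funext j
    by_cases h : j = i
    · subst h; simp
    · simp [Pi.single_eq_of_ne h, Pi.mulSingle_eq_of_ne h]
  unfold colorAct
  rw [harg, MonoidHom.noncommPiCoprod_mulSingle]
  show s i ^ (Multiplicative.toAdd (Multiplicative.ofAdd (1 : ZMod 2))).val = s i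
  rw [show (Multiplicative.toAdd (Multiplicative.ofAdd (1 : ZMod 2))).val = 1 from rfl, pow_one]

private lemma colorAct_comm (x y : Fin N → ZMod 2) :
    colorAct s hinv hcomm x * colorAct s hinv hcomm y =
      colorAct s hinv hcomm y * colorAct s hinv hcomm x := by
  rw [← colorAct_add, ← colorAct_add, add_comm]

end Aux

/-- A connected graph with a regular edge coloring (given by fixed-point-free
involutions `s i`, one per color) satisfying the quadrilateral property (the
`s i` pairwise commute) is isomorphic, compatibly with the colorings, to the
quotient `Q_C` of the hypercube `Q_N` by a linear code `C` with no codewords of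
weight `1` or `2`. -/
theorem connected_quadrilateral_coloring_is_code_quotient {V : Type*} [Fintype V]
    (G : SimpleGraph V) (hconn : G.Connected) (N : ℕ)
    (s : Fin N → Equiv.Perm V)
    (hinv : ∀ i, ∀ v, s i (s i v) = v)
    (hfix : ∀ i v, s i v ≠ v)
    (hadj : ∀ i v, G.Adj v (s i v))
    (hdist : ∀ i j v, i ≠ j → s i v ≠ s j v)
    (hedge : ∀ v w, G.Adj v w → ∃ i, w = s i v)
    (hcomm : ∀ i j v, s i (s j v) = s j (s i v)) :
    ∃ C : Submodule (ZMod 2) (Fin N → ZMod 2),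
      (∀ c ∈ C, c ≠ 0 → 3 ≤ hammingNorm c) ∧
      ∃ φ : ((Fin N → ZMod 2) ⧸ C) ≃ V,
        (∀ (x : (Fin N → ZMod 2) ⧸ C) (i : Fin N),
          φ (x + Submodule.Quotient.mk (Pi.single i 1)) = s i (φ x)) ∧
        (∀ a b : (Fin N → ZMod 2) ⧸ C,
          (codeQuotientGraph C).Adj a b ↔ G.Adj (φ a) (φ b)) := by
  classical
  obtain ⟨v₀⟩ : Nonempty V := hconn.nonempty
  set π : (Fin N → ZMod 2) → Equiv.Perm V := colorAct s hinv hcomm with hπ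
  have πadd : ∀ x y, π (x + y) = π x * π y := colorAct_add s hinv hcomm
  have πzero : π 0 = 1 := colorAct_zero s hinv hcomm
  have πsingle : ∀ i, π (Pi.single i 1) = s i := colorAct_single s hinv hcomm
  have πcomm : ∀ x y, π x * π y = π y * π x := colorAct_comm s hinv hcomm
  -- the code: the stabilizer of `v₀`
  let C : Submodule (ZMod 2) (Fin N → ZMod 2) :=
    { carrier := {x | π x v₀ = v₀}
      add_mem' := fun {a b} ha hb => by
        have ha' : π a v₀ = v₀ := ha
        have hb' : π b v₀ = v₀ := hb
        show π (a + b) v₀ = v₀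
        rw [πadd]
        show π a (π b v₀) = v₀
        rw [hb', ha']
      zero_mem' := by
        show π 0 v₀ = v₀
        rw [πzero]; rfl
      smul_mem' := fun m x hx => by
        have hx' : π x v₀ = v₀ := hx
        rcases zmod2_cases m with h | h <;> subst h
        · show π ((0 : ZMod 2) • x) v₀ = v₀
          rw [zero_smul, πzero]; rfl
        · show π ((1 : ZMod 2) • x) v₀ = v₀
          rw [one_smul]; exact hx' }
  have memC : ∀ x : Fin N → ZMod 2, x ∈ C ↔ π x v₀ = v₀ := fun _ => Iff.rfl
  -- the neg of anything acts like itself composed appropriately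
  have πneg_cancel : ∀ x : Fin N → ZMod 2, π (-x) * π x = 1 := fun x => by
    rw [← πadd, neg_add_cancel, πzero]
  set f : (Fin N → ZMod 2) → V := fun x => π x v₀ with hf
  -- well-definedness on the quotient
  let φ₀ : ((Fin N → ZMod 2) ⧸ C) → V := fun q => Quotient.liftOn' q f (by
    intro a b h
    have hmem : -a + b ∈ C := QuotientAddGroup.leftRel_apply.mp h
    have hv : π (-a + b) v₀ = v₀ := (memC _).mp hmem
    have key : f b = f a := by
      have hb : b = a + (-a + b) := by abel
      show π b v₀ = π a v₀
      rw [hb, πadd]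
      show π a (π (-a + b) v₀) = π a v₀
      rw [hv]
    exact key.symm)
  have φ₀mk : ∀ x : Fin N → ZMod 2, φ₀ (Submodule.Quotient.mk x) = f x := fun _ => rfl
  -- injectivity
  have hinj : Function.Injective φ₀ := by
    intro q₁ q₂
    induction q₁ using Quotient.inductionOn' with
    | h a =>
    induction q₂ using Quotient.inductionOn' with
    | h b =>
    intro h
    have hab : f a = f b := h
    have hmem : a - b ∈ C := by
      rw [memC]
      have : π (a - b) v₀ = (π (-b) * π a) v₀ := by
        rw [sub_eq_add_neg, πadd, πcomm]
      rw [this]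
      show π (-b) (π a v₀) = v₀
      rw [show π a v₀ = π b v₀ from hab]
      show (π (-b) * π b) v₀ = v₀
      rw [πneg_cancel]
      rfl
    exact (Submodule.Quotient.eq C).mpr hmem
  -- surjectivity
  have hstep : ∀ (u w : V) (p : G.Walk u w), (∃ x, f x = u) → ∃ y, f y = w := by
    intro u w p
    induction p with
    | nil => exact id
    | cons h p ih =>
      rename_i u' v' w'
      intro hx
      apply ih
      obtain ⟨x, hx⟩ := hx
      obtain ⟨i, hi⟩ := hedge _ _ h
      refine ⟨Pi.single i 1 + x, ?_⟩
      show π (Pi.single i 1 + x) v₀ = v'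
      rw [πadd, πsingle]
      show s i (π x v₀) = v'
      rw [show π x v₀ = u' from hx, ← hi]
  have hsurj₀ : ∀ w : V, ∃ x, f x = w := by
    intro w
    obtain ⟨p⟩ := hconn.preconnected v₀ w
    exact hstep v₀ w p ⟨0, by show π 0 v₀ = v₀; rw [πzero]; rfl⟩
  have hsurj : Function.Surjective φ₀ := by
    intro w
    obtain ⟨x, hx⟩ := hsurj₀ w
    exact ⟨Submodule.Quotient.mk x, (φ₀mk x).trans hx⟩
  let φ : ((Fin N → ZMod 2) ⧸ C) ≃ V := Equiv.ofBijective φ₀ ⟨hinj, hsurj⟩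
  have φmk : ∀ x : Fin N → ZMod 2, φ (Submodule.Quotient.mk x) = f x := fun _ => rfl
  -- property 1: compatibility with the coloring
  have hcompat : ∀ (x : (Fin N → ZMod 2) ⧸ C) (i : Fin N),
      φ (x + Submodule.Quotient.mk (Pi.single i 1)) = s i (φ x) := by
    intro x i
    induction x using Quotient.inductionOn' with
    | h a =>
    have hmk : (Quotient.mk'' a : (Fin N → ZMod 2) ⧸ C) = Submodule.Quotient.mk a := rfl
    rw [hmk, ← Submodule.Quotient.mk_add, φmk, φmk]
    show π (a + Pi.single i 1) v₀ = s i (π a v₀)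
    rw [add_comm, πadd, πsingle]
    rfl
  -- the weight condition
  have hweight : ∀ c ∈ C, c ≠ 0 → 3 ≤ hammingNorm c := by
    intro c hc hne
    by_contra hlt
    push_neg at hlt
    have hcv : π c v₀ = v₀ := (memC c).mp hc
    have hpos : 0 < hammingNorm c := hammingNorm_pos_iff.mpr hne
    have hval : ∀ j, c j ≠ 0 → c j = 1 := by
      intro j hj
      rcases zmod2_cases (c j) with h | h
      · exact absurd h hj
      · exact h
    interval_cases h : hammingNorm c
    · -- weight 1
      obtain ⟨i, hi⟩ := Finset.card_eq_one.mp h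
      have hmemi : i ∈ ({i} : Finset (Fin N)) := Finset.mem_singleton_self i
      rw [← hi] at hmemi
      have hci : c i = 1 := hval i (Finset.mem_filter.mp hmemi).2
      have hcformula : c = Pi.single i 1 := by
        funext j
        by_cases hji : j = i
        · subst hji; rw [hci, Pi.single_eq_same]
        · rw [Pi.single_eq_of_ne hji]
          by_contra hj
          have : j ∈ ({i} : Finset (Fin N)) := by
            rw [← hi]; exact Finset.mem_filter.mpr ⟨Finset.mem_univ j, hj⟩
          exact hji (Finset.mem_singleton.mp this)
      rw [hcformula, πsingle] at hcv
      exact hfix i v₀ hcv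
    · -- weight 2
      obtain ⟨i, j, hij, hijset⟩ := Finset.card_eq_two.mp h
      have hmemi : i ∈ ({i, j} : Finset (Fin N)) := by simp
      have hmemj : j ∈ ({i, j} : Finset (Fin N)) := by simp
      rw [← hijset] at hmemi hmemj
      have hci : c i = 1 := hval i (Finset.mem_filter.mp hmemi).2
      have hcj : c j = 1 := hval j (Finset.mem_filter.mp hmemj).2
      have hcformula : c = Pi.single i 1 + Pi.single j 1 := by
        funext k
        simp only [Pi.add_apply]
        by_cases hki : k = i
        · subst hki
          rw [Pi.single_eq_same, Pi.single_eq_of_ne hij, add_zero, hci]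
        · by_cases hkj : k = j
          · subst hkj
            rw [Pi.single_eq_of_ne hki, Pi.single_eq_same, zero_add, hcj]
          · rw [Pi.single_eq_of_ne hki, Pi.single_eq_of_ne hkj, add_zero]
            by_contra hk
            have hkmem : k ∈ ({i, j} : Finset (Fin N)) := by
              rw [← hijset]; exact Finset.mem_filter.mpr ⟨Finset.mem_univ k, hk⟩
            rcases Finset.mem_insert.mp hkmem with h' | h'
            · exact hki h'
            · exact hkj (Finset.mem_singleton.mp h')
      rw [hcformula, πadd, πsingle, πsingle] at hcv
      have hcv' : s i (s j v₀) = v₀ := hcv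
      have : s j v₀ = s i v₀ := by
        have := congrArg (s i) hcv'
        rwa [hinv] at this
      exact hdist j i v₀ (fun hh => hij hh.symm) this
  exact ⟨C, hweight, φ, hcompat, by
    intro a b
    constructor
    · intro hab
      obtain ⟨hne, hrel | hrel⟩ := hab
      · obtain ⟨i, rfl⟩ := hrel
        rw [hcompat]
        exact hadj i (φ a)
      · obtain ⟨i, rfl⟩ := hrel
        rw [hcompat]
        exact (hadj i (φ b)).symm
    · intro hab
      have hne : a ≠ b := by
        rintro rfl
        exact G.irrefl hab
      obtain ⟨i, hi⟩ := hedge _ _ hab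
      have : φ b = φ (a + Submodule.Quotient.mk (Pi.single i 1)) := by
        rw [hcompat]; exact hi
      have hb : b = a + Submodule.Quotient.mk (Pi.single i 1) := φ.injective this
      exact ⟨hne, Or.inl ⟨i, hb⟩⟩⟩
end

section
/- Let W be a real vector space and let A₁, …, A_k be linear endomorphisms of W such that Aᵢ² = identity for every i and Aᵢ ∘ A_j = − A_j ∘ Aᵢ whenever i ≠ j. Suppose there exist a nonzero vector v in W and a sign ε ∈ {1, −1} such that (A₁ ∘ A₂ ∘ ⋯ ∘ A_k)(v) = ε v. Then k(k−1)/2 is even, i.e., k is congruent to 0 or 1 modulo 4; if moreover k is even, then k is divisible by 4. -/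
/-! Pairwise anticommuting involutions satisfy `(A₁ ⋯ A_k)² = (-1)^(k choose 2)`: moving each
factor of the second copy of the product next to its twin in the first crosses every pair `i < j`
exactly once. Evaluating at `v` gives `(-1)^(k choose 2) • v = ε² • v = v`, so `k choose 2` is
even, which happens exactly when `k ≡ 0, 1 (mod 4)`. -/

namespace List

variable {M : Type*} [Monoid M] [HasDistribNeg M]

theorem prod_mul_eq_neg_one_pow_mul_mul_prod {a : M} {l : List M}
    (h : ∀ b ∈ l, b * a = -(a * b)) : l.prod * a = (-1) ^ l.length * (a * l.prod) := by
  induction l with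
  | nil => simp
  | cons b l ih =>
    rw [forall_mem_cons] at h
    rw [prod_cons, mul_assoc, ih h.2, ← mul_assoc b, ((Commute.neg_one_right b).pow_right _).eq,
      mul_assoc, ← mul_assoc b, h.1, length_cons, pow_succ]
    simp only [neg_mul, mul_neg, mul_one, mul_assoc]

theorem prod_mul_prod_eq_neg_one_pow_choose_two {l : List M} (hsq : ∀ a ∈ l, a * a = 1)
    (hanti : l.Pairwise fun a b => b * a = -(a * b)) :
    l.prod * l.prod = (-1) ^ l.length.choose 2 := by
  induction l with
  | nil => simp
  | cons a l ih =>
    rw [forall_mem_cons] at hsq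
    rw [pairwise_cons] at hanti
    calc (a * l.prod) * (a * l.prod) = a * (l.prod * a) * l.prod := by simp only [mul_assoc]
      _ = (-1) ^ l.length * (a * a) * (l.prod * l.prod) := by
        rw [prod_mul_eq_neg_one_pow_mul_mul_prod hanti.1, ← mul_assoc a,
          ((Commute.neg_one_right a).pow_right _).eq]
        simp only [mul_assoc]
      _ = (-1) ^ (l.length + 1).choose 2 := by
        rw [hsq.1, ih hsq.2 hanti.2, mul_one, ← pow_add, Nat.choose_succ_succ',
          Nat.choose_one_right]

end List

theorem Nat.even_choose_two_iff (n : ℕ) : Even (n.choose 2) ↔ n % 4 = 0 ∨ n % 4 = 1 := by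
  induction n using Nat.strong_induction_on with
  | _ n ih =>
    match n with
    | 0 | 1 | 2 | 3 => decide
    | n + 4 =>
      have hstep : (n + 4).choose 2 = n.choose 2 + 2 * (2 * n + 3) := by
        simp only [Nat.choose_succ_succ', Nat.choose_zero_right]
        rw [Nat.choose_one_right]; ring
      rw [hstep, Nat.even_add, ih n (by omega)]
      simp only [even_two_mul, iff_true]
      omega

theorem even_of_mul_self_eq_neg_one_pow {R W : Type*} [CommRing R] [IsCancelMulZero R]
    [AddCommGroup W] [Module R W] [Module.IsTorsionFree R W] (hR : (-1 : R) ≠ 1)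
    {T : Module.End R W} {m : ℕ} (hT : T * T = (-1) ^ m) {v : W} (hv : v ≠ 0) {ε : R}
    (hε : ε * ε = 1) (hTv : T v = ε • v) : Even m := by
  have h : (-1 : R) ^ m • v = (1 : R) • v := by
    calc (-1 : R) ^ m • v = ((-1) ^ m : Module.End R W) v := by
          rw [← Module.algebraMap_end_apply R R, map_pow, map_neg, map_one]
      _ = (ε * ε) • v := by rw [← hT, Module.End.mul_apply, hTv, map_smul, hTv, smul_smul]
      _ = (1 : R) • v := by rw [hε]
  exact (neg_one_pow_eq_one_iff_even hR).1 (smul_left_injective R hv h)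

/-- If `A₁, …, A_k` are linear endomorphisms of a real vector space with
`Aᵢ² = id` and `Aᵢ ∘ Aⱼ = −Aⱼ ∘ Aᵢ` for `i ≠ j`, and the ordered composite
`A₁ ∘ A₂ ∘ ⋯ ∘ A_k` sends some nonzero vector `v` to `± v`, then `k(k−1)/2` is
even, i.e. `k ≡ 0` or `1 (mod 4)`; in particular, if `k` is even then `4 ∣ k`. -/
theorem eigenvector_of_anticommuting_involutions {W : Type*} [AddCommGroup W]
    [Module ℝ W] (k : ℕ) (A : Fin k → Module.End ℝ W)
    (hsq : ∀ i, A i * A i = 1)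
    (hanti : ∀ i j, i ≠ j → A i * A j = -(A j * A i))
    (v : W) (hv : v ≠ 0) (ε : ℝ) (hε : ε = 1 ∨ ε = -1)
    (hfix : (((List.finRange k).map A).prod) v = ε • v) :
    Even (k * (k - 1) / 2) ∧ (k % 4 = 0 ∨ k % 4 = 1) ∧ (Even k → 4 ∣ k) := by
  have hprod := List.prod_mul_prod_eq_neg_one_pow_choose_two (l := (List.finRange k).map A)
    (by simpa using hsq)
    (List.pairwise_map.2 <| (List.pairwise_lt_finRange k).imp fun hij => hanti _ _ hij.ne')
  rw [List.length_map, List.length_finRange] at hprod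
  have heven : Even (k.choose 2) :=
    even_of_mul_self_eq_neg_one_pow (by norm_num) hprod hv
      (by rcases hε with rfl | rfl <;> norm_num) hfix
  have hmod := (Nat.even_choose_two_iff k).1 heven
  refine ⟨Nat.choose_two_right k ▸ heven, hmod, fun hk => ?_⟩
  rw [Nat.even_iff] at hk
  omega
end

section
/- For a finite set S of positive integers and a positive integer i not in S, let μ(S, i) denote the number of elements j of S with j < i. Then for all distinct positive integers i and j and every finite set S of positive integers containing neither i nor j, the sum μ(S, i) + μ(S ∪ {i}, j) + μ(S, j) + μ(S ∪ {j}, i) is odd. Consequently, the dashing of the hypercube graph Q_N that dashes the edge from the vertex with support S to the vertex with support S ∪ {i} exactly when μ(S, i) is odd is a totally odd dashing: every bicolor 4-cycle of the parallel edge coloring of Q_N contains an odd number of dashed edges. -/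
/-- `mu S i` is the number of elements of `S` smaller than `i`. -/
def mu (S : Finset ℕ) (i : ℕ) : ℕ := (S.filter (fun j => j < i)).card

lemma mu_insert (S : Finset ℕ) (i j : ℕ) (hiS : i ∉ S) :
    mu (insert i S) j = (if i < j then 1 else 0) + mu S j := by
  unfold mu
  rw [Finset.filter_insert]
  split
  · rw [Finset.card_insert_of_notMem (fun h => hiS (Finset.mem_filter.mp h).1)]
    omega
  · simp

lemma parity_if (n : ℕ) : (if Odd n then 1 else 0) % 2 = n % 2 := by
  rcases Nat.even_or_odd n with h | h
  · simp [Nat.even_iff.mp h, Nat.odd_iff]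
  · simp [h, Nat.odd_iff.mp h]

/-- For distinct positive integers `i, j` and a finite set `S` of positive
integers containing neither, the sum `μ(S,i) + μ(S∪{i},j) + μ(S,j) + μ(S∪{j},i)`
is odd. Consequently, dashing the edge from the vertex with support `S` to the
vertex with support `S ∪ {i}` of the hypercube `Q_N` exactly when `μ(S,i)` is
odd yields a totally odd dashing: the bicolor 4-cycle through `S` with colors
`i, j`, whose edges are `(S,i)`, `(S,j)`, `(S∪{i},j)`, `(S∪{j},i)`, contains an
odd number of dashed edges. -/
theorem signed_group_dashing_is_totally_odd (S : Finset ℕ) (i j : ℕ)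
    (hi : 0 < i) (hj : 0 < j) (hS : ∀ a ∈ S, 0 < a)
    (hij : i ≠ j) (hiS : i ∉ S) (hjS : j ∉ S) :
    Odd (mu S i + mu (insert i S) j + mu S j + mu (insert j S) i) ∧
    Odd (((if Odd (mu S i) then 1 else 0) + (if Odd (mu S j) then 1 else 0) +
      (if Odd (mu (insert i S) j) then 1 else 0) +
      (if Odd (mu (insert j S) i) then 1 else 0) : ℕ)) := by
  have h1 := mu_insert S i j hiS
  have h2 := mu_insert S j i hjS
  have hlt : (if i < j then 1 else 0) + (if j < i then 1 else 0) = 1 := by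
    rcases lt_or_gt_of_ne hij with h | h
    · simp [h, Nat.not_lt.mpr h.le]
    · simp [h, Nat.not_lt.mpr h.le]
  have hodd : Odd (mu S i + mu (insert i S) j + mu S j + mu (insert j S) i) := by
    rw [h1, h2, Nat.odd_iff]; omega
  refine ⟨hodd, ?_⟩
  rw [Nat.odd_iff] at hodd ⊢
  have p1 := parity_if (mu S i)
  have p2 := parity_if (mu S j)
  have p3 := parity_if (mu (insert i S) j)
  have p4 := parity_if (mu (insert j S) i)
  omega
end
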